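/- If two rational numbers p = d(Ā)/d(A) and q = d(B̄)/d(B) coming from admissible linear chains A and B are equal, then A = B (the chains have the same length and the same entries). -/

import Mathlib

/-- The tridiagonal matrix of a linear chain: diagonal entries from the list,
entries `-1` on the first sub- and super-diagonals, `0` elsewhere. -/
def chainMatrix (l : List ℤ) : Matrix (Fin l.length) (Fin l.length) ℤ :=
  fun i j =>
    if i = j then l.get i
    else if (i : ℕ) + 1 = (j : ℕ) ∨ (j : ℕ) + 1 = (i : ℕ) then -1 else 0

/-- The discriminant of a linear chain. -/
def disc (l : List ℤ) : ℤ := (chainMatrix l).det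

/-- A linear chain is admissible if it is nonempty and all entries are ≥ 2. -/
def Admissible (l : List ℤ) : Prop := l ≠ [] ∧ ∀ a ∈ l, 2 ≤ a

/-- The inductance of a chain. -/
def ind (l : List ℤ) : ℚ := (disc l.tail : ℚ) / (disc l : ℚ)

/-!
Expanding the tridiagonal determinant along its first row gives
`d(a :: b :: t) = a * d(b :: t) - d(t)`, so for an admissible chain `A = a :: A'` one has
`e(A)⁻¹ = a - e(A')` with `0 < e(A') < 1` (and `e(A)⁻¹ = a` if `A'` is empty): this is the
Hirzebruch–Jung continued fraction `e(A)⁻¹ = a₁ - 1 / (a₂ - 1 / (⋯))`. Hence the head is recovered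
as `a = ⌈e(A)⁻¹⌉`, the inductance of the tail as `a - e(A)⁻¹`, and induction on the chain
finishes the proof.
-/

namespace Matrix

variable {R : Type*} [CommRing R] {n : ℕ}

theorem det_succ_of_col_zero_succ_eq_zero (M : Matrix (Fin (n + 1)) (Fin (n + 1)) R)
    (h : ∀ i : Fin n, M i.succ 0 = 0) : M.det = M 0 0 * (M.submatrix Fin.succ Fin.succ).det := by
  simp [det_succ_column_zero M, Fin.sum_univ_succ, h]

theorem det_succ_succ_of_row_zero_succ_succ_eq_zero (M : Matrix (Fin (n + 2)) (Fin (n + 2)) R)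
    (h : ∀ j : Fin n, M 0 j.succ.succ = 0) :
    M.det = M 0 0 * (M.submatrix Fin.succ Fin.succ).det -
      M 0 1 * (M.submatrix Fin.succ (Fin.succAbove 1)).det := by
  simp [det_succ_row_zero M, Fin.sum_univ_succ, h]
  ring

end Matrix

@[simp]
lemma disc_nil : disc [] = 1 := by
  simp [disc]

@[simp]
lemma disc_singleton (a : ℤ) : disc [a] = a := by
  simp [disc, chainMatrix]

lemma chainMatrix_cons_succ_succ (a : ℤ) (l : List ℤ) (i j : Fin l.length) :
    chainMatrix (a :: l) i.succ j.succ = chainMatrix l i j := by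
  simp only [chainMatrix, Fin.val_succ]
  split_ifs <;> simp_all [Fin.ext_iff]

lemma disc_cons_cons (a b : ℤ) (t : List ℤ) :
    disc (a :: b :: t) = a * disc (b :: t) - disc t := by
  set M := chainMatrix (a :: b :: t)
  have hminor : (M.submatrix Fin.succ (Fin.succAbove 1)).det = -disc t := by
    rw [Matrix.det_succ_of_col_zero_succ_eq_zero (n := t.length)]
    · have hcorner : M.submatrix Fin.succ (Fin.succAbove 1) 0 0 = -1 := rfl
      have hrest : (M.submatrix Fin.succ (Fin.succAbove 1)).submatrix Fin.succ Fin.succ =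
          chainMatrix t := by
        ext i j
        simp only [Matrix.submatrix_apply, M]
        rw [← Fin.succ_zero_eq_one, Fin.succ_succAbove_succ, Fin.zero_succAbove,
          chainMatrix_cons_succ_succ, chainMatrix_cons_succ_succ]
      rw [hcorner, hrest, disc, neg_one_mul]
    · intro i
      simp [M, chainMatrix, Fin.ext_iff]
  have hrest : M.submatrix Fin.succ Fin.succ = chainMatrix (b :: t) := by
    ext i j
    exact chainMatrix_cons_succ_succ a (b :: t) i j
  rw [disc, Matrix.det_succ_succ_of_row_zero_succ_succ_eq_zero (n := t.length), hminor, hrest]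
  · show a * disc (b :: t) - (-1) * -disc t = a * disc (b :: t) - disc t
    ring
  · intro j
    simp [chainMatrix, Fin.ext_iff]

lemma ind_singleton (a : ℤ) : ind [a] = (a : ℚ)⁻¹ := by
  simp [ind]

lemma inv_ind_cons_cons (a b : ℤ) (t : List ℤ) (h : disc (b :: t) ≠ 0) :
    (ind (a :: b :: t))⁻¹ = a - ind (b :: t) := by
  have h' : (disc (b :: t) : ℚ) ≠ 0 := by exact_mod_cast h
  simp only [ind, List.tail_cons, inv_div, disc_cons_cons]
  field_simp
  push_cast
  ring

namespace Admissible

variable {a b : ℤ} {l t : List ℤ}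

lemma two_le_head (h : Admissible (a :: l)) : 2 ≤ a := h.2 a List.mem_cons_self

lemma of_cons_cons (h : Admissible (a :: b :: t)) : Admissible (b :: t) :=
  ⟨List.cons_ne_nil b t, fun x hx => h.2 x (List.mem_cons_of_mem a hx)⟩

lemma disc_tail_pos_and_lt (h : Admissible l) : 0 < disc l.tail ∧ disc l.tail < disc l := by
  induction l with
  | nil => exact absurd rfl h.1
  | cons a l ih =>
    have ha := h.two_le_head
    cases l with
    | nil => simp only [List.tail_cons, disc_nil, disc_singleton]; omega
    | cons b t =>
      obtain ⟨ht_pos, ht_lt⟩ := ih h.of_cons_cons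
      simp only [List.tail_cons] at ht_pos ht_lt ⊢
      rw [disc_cons_cons]
      constructor <;> nlinarith

lemma disc_pos (h : Admissible l) : 0 < disc l :=
  h.disc_tail_pos_and_lt.1.trans h.disc_tail_pos_and_lt.2

lemma ind_pos (h : Admissible l) : 0 < ind l := by
  have := h.disc_tail_pos_and_lt.1
  have := h.disc_pos
  unfold ind
  positivity

lemma ind_lt_one (h : Admissible l) : ind l < 1 := by
  rw [ind, div_lt_one (by exact_mod_cast h.disc_pos)]
  exact_mod_cast h.disc_tail_pos_and_lt.2

lemma ceil_inv_ind (h : Admissible (a :: l)) : ⌈(ind (a :: l))⁻¹⌉ = a := by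
  rw [Int.ceil_eq_iff]
  cases l with
  | nil => simp [ind_singleton]
  | cons b t =>
    have ht := h.of_cons_cons
    rw [inv_ind_cons_cons a b t ht.disc_pos.ne']
    constructor <;> linarith [ht.ind_pos, ht.ind_lt_one]

lemma ind_cons_cons_ne_ind_singleton (h : Admissible (a :: b :: t)) :
    ind (a :: b :: t) ≠ ind [a] := by
  have ht := h.of_cons_cons
  intro heq
  have hinv := congrArg (·⁻¹) heq
  simp only [inv_ind_cons_cons a b t ht.disc_pos.ne', ind_singleton, inv_inv,
    sub_eq_self] at hinv
  exact ht.ind_pos.ne' hinv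

end Admissible

theorem ind_injective (A B : List ℤ) (hA : Admissible A) (hB : Admissible B)
    (h : ind A = ind B) : A = B := by
  induction A generalizing B with
  | nil => exact absurd rfl hA.1
  | cons a A' ih =>
    obtain ⟨b, B', rfl⟩ := List.exists_cons_of_ne_nil hB.1
    obtain rfl : a = b := by rw [← hA.ceil_inv_ind, ← hB.ceil_inv_ind, h]
    rcases A' with _ | ⟨a', A''⟩ <;> rcases B' with _ | ⟨b', B''⟩
    · rfl
    · exact absurd h.symm hB.ind_cons_cons_ne_ind_singleton
    · exact absurd h hA.ind_cons_cons_ne_ind_singleton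
    · have hinv := congrArg (·⁻¹) h
      simp only [inv_ind_cons_cons _ _ _ hA.of_cons_cons.disc_pos.ne',
        inv_ind_cons_cons _ _ _ hB.of_cons_cons.disc_pos.ne', sub_right_inj] at hinv
      rw [ih _ hA.of_cons_cons hB.of_cons_cons hinv]
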